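/- arXiv:2408.17176 — 4 statements merged into one kernel-verified Lean document; each statement's English description precedes it below -/
import Mathlib

section
/- Let k ≥ 2 and 0 < d ≤ 1. There exists n₀ = n₀(k,d) such that for every n ≥ n₀, every k-partite k-graph H with n vertices in each vertex class and at least d·n^k edges contains at least d^(2^k)·n^(2k)/2 copies of K_k^(k)(2), where copies are counted as ordered tuples (x_1, y_1, …, x_k, y_k) with x_i ≠ y_i in the i-th class for each i such that all 2^k sets {v_1,…,v_k} with v_i ∈ {x_i, y_i} are edges of H. -/
open Finset

namespace BlowupAux

variable {k n : ℕ}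

/-- level-`j` transversal: take `x i` when `i < j` and `g i`, else `y i`. -/
def tr (j : ℕ) (g : Fin k → Bool) (x y : Fin k → Fin n) : Fin k → Fin n :=
  fun i => if i.val < j ∧ g i then x i else y i

/-- indicator that all level-`j` transversals are edges. -/
def F (E : Finset (Fin k → Fin n)) (j : ℕ) (x y : Fin k → Fin n) : ℝ :=
  if ∀ g : Fin k → Bool, tr j g x y ∈ E then 1 else 0

def S (E : Finset (Fin k → Fin n)) (j : ℕ) : ℝ :=
  ∑ x : Fin k → Fin n, ∑ y : Fin k → Fin n, F E j x y

lemma F_nonneg (E : Finset (Fin k → Fin n)) (j : ℕ) (x y : Fin k → Fin n) :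
    0 ≤ F E j x y := by
  unfold F; split <;> norm_num

lemma S_zero (E : Finset (Fin k → Fin n)) : S E 0 = (n : ℝ) ^ k * E.card := by
  have h : ∀ x y : Fin k → Fin n, F E 0 x y = if y ∈ E then 1 else 0 := by
    intro x y
    have ht : ∀ g : Fin k → Bool, tr 0 g x y = y := by
      intro g; funext i; simp [tr]
    simp [F, ht]
  simp only [S, h]
  rw [Finset.sum_const, Finset.sum_boole]
  simp [Finset.filter_univ_mem, mul_comm]

lemma F_update_left (E : Finset (Fin k → Fin n)) (j : ℕ) (x y : Fin k → Fin n)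
    (i : Fin k) (hi : j ≤ i.val) (a : Fin n) :
    F E j (Function.update x i a) y = F E j x y := by
  have h : ∀ g : Fin k → Bool, tr j g (Function.update x i a) y = tr j g x y := by
    intro g; funext l
    rcases eq_or_ne l i with rfl | hl
    · simp [tr, Nat.not_lt.mpr hi]
    · simp [tr, Function.update_apply, hl]
  simp [F, h]

lemma F_succ (E : Finset (Fin k → Fin n)) {j : ℕ} (hj : j < k) (x y : Fin k → Fin n) :
    F E (j + 1) x y
      = F E j x y * F E j x (Function.update y ⟨j, hj⟩ (x ⟨j, hj⟩)) := by
  set jf : Fin k := ⟨j, hj⟩ with hjfdef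
  have hjf : (jf : ℕ) = j := rfl
  unfold F
  rw [ite_zero_mul_ite_zero, mul_one]
  congr 1
  rw [eq_iff_iff]
  have hval : ∀ l : Fin k, l ≠ jf → (l.val < j + 1) = (l.val < j) := by
    intro l h
    have : l.val ≠ j := fun hv => h (Fin.ext hv)
    simp only [eq_iff_iff]; omega
  constructor
  · intro h
    refine ⟨fun g => ?_, fun g => ?_⟩
    · have h2 := h (Function.update g jf false)
      have key : tr j g x y = tr (j+1) (Function.update g jf false) x y := by
        funext l
        rcases eq_or_ne l jf with rfl | hl
        · simp [tr, hjf]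
        · simp [tr, hval l hl, Function.update_apply, hl]
      rw [key]; exact h2
    · have h2 := h (Function.update g jf true)
      have key : tr j g x (Function.update y jf (x jf))
          = tr (j+1) (Function.update g jf true) x y := by
        funext l
        rcases eq_or_ne l jf with rfl | hl
        · simp [tr, hjf, Function.update_apply, Nat.lt_succ_self]
        · simp [tr, hval l hl, Function.update_apply, hl]
      rw [key]; exact h2
  · rintro ⟨h1, h2⟩ g
    rcases em (g jf = true) with hg | hg
    · have h3 := h2 g
      have key : tr (j+1) g x y = tr j g x (Function.update y jf (x jf)) := by
        funext l
        rcases eq_or_ne l jf with rfl | hl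
        · simp [tr, hjf, hg, Function.update_apply, Nat.lt_succ_self]
        · simp [tr, hval l hl, Function.update_apply, hl]
      rw [key]; exact h3
    · have h3 := h1 g
      have key : tr (j+1) g x y = tr j g x y := by
        funext l
        rcases eq_or_ne l jf with rfl | hl
        · simp [tr, hjf, hg]
        · simp [tr, hval l hl]
      rw [key]; exact h3

lemma step (E : Finset (Fin k → Fin n)) {j : ℕ} (hj : j < k) :
    S E j ^ 2 ≤ (n : ℝ) ^ (2 * k) * S E (j + 1) := by
  have hk1 : 1 ≤ k := by omega
  set jf : Fin k := ⟨j, hj⟩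
  set W := ({l : Fin k // l ≠ jf} → Fin n)
  set e := Equiv.funSplitAt jf (Fin n) with he
  set σ : Fin n → W → (Fin k → Fin n) := fun a u => e.symm (a, u) with hσ
  have hσ_at : ∀ a u, σ a u jf = a := by
    intro a u; simp [hσ, he, Equiv.funSplitAt, Equiv.piSplitAt]
  have hσ_upd : ∀ a b u, Function.update (σ a u) jf b = σ b u := by
    intro a b u; funext l
    rcases eq_or_ne l jf with rfl | h
    · simp [hσ, he, Equiv.funSplitAt, Equiv.piSplitAt]
    · simp [hσ, he, Equiv.funSplitAt, Equiv.piSplitAt, h, Function.update_apply]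
  set Q : W → W → Fin n → ℝ := fun u v b => F E j (σ b u) (σ b v) with hQdef
  have hQ : ∀ a b u v, F E j (σ a u) (σ b v) = Q u v b := by
    intro a b u v
    rw [hQdef]
    have : σ a u = Function.update (σ b u) jf a := (hσ_upd b a u).symm
    rw [this, F_update_left E j _ _ jf le_rfl a]
  -- reindex sums through the equiv
  have reindex : ∀ G : (Fin k → Fin n) → (Fin k → Fin n) → ℝ,
      (∑ x, ∑ y, G x y) = ∑ u : W, ∑ v : W, ∑ a, ∑ b, G (σ a u) (σ b v) := by
    intro G
    rw [← Equiv.sum_comp e.symm (fun x => ∑ y, G x y)]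
    rw [Fintype.sum_prod_type]
    rw [Finset.sum_comm]
    congr 1; funext u
    have : ∀ a : Fin n, (∑ y, G (σ a u) y) = ∑ v : W, ∑ b, G (σ a u) (σ b v) := by
      intro a
      rw [← Equiv.sum_comp e.symm (fun y => G (σ a u) y), Fintype.sum_prod_type,
        Finset.sum_comm]
    simp only [hσ] at this
    simp_rw [this]
    rw [Finset.sum_comm]
  set g : W → W → ℝ := fun u v => ∑ a, Q u v a with hg
  have key2 : S E j = (n : ℝ) * ∑ u : W, ∑ v : W, g u v := by
    rw [S, reindex (F E j)]
    simp_rw [hQ]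
    have : ∀ u v : W, (∑ a : Fin n, ∑ b : Fin n, Q u v b) = (n : ℝ) * g u v := by
      intro u v
      rw [Finset.sum_const, hg]
      simp [nsmul_eq_mul]
    simp_rw [this, ← Finset.mul_sum]
  have key1 : S E (j + 1) = ∑ u : W, ∑ v : W, g u v ^ 2 := by
    rw [S]
    have hF : ∀ x y, F E (j+1) x y = F E j x y * F E j x (Function.update y jf (x jf)) :=
      fun x y => F_succ E hj x y
    simp_rw [hF]
    rw [reindex (fun x y => F E j x y * F E j x (Function.update y jf (x jf)))]
    congr 1; funext u; congr 1; funext v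
    have : ∀ a b : Fin n,
        F E j (σ a u) (σ b v) * F E j (σ a u) (Function.update (σ b v) jf (σ a u jf))
          = Q u v b * Q u v a := by
      intro a b
      rw [hσ_at, hσ_upd, hQ, hQ]
    simp_rw [this]
    rw [sq, Finset.sum_mul_sum, Finset.sum_comm]
  -- Cauchy–Schwarz over pairs (u, v)
  have hcard : (Fintype.card W : ℝ) = (n : ℝ) ^ (k - 1) := by
    have : Fintype.card {l : Fin k // l ≠ jf} = k - 1 := by
      rw [Fintype.card_subtype_compl, Fintype.card_subtype_eq, Fintype.card_fin]
    rw [show (Fintype.card W) = n ^ (k - 1) by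
      rw [Fintype.card_fun, Fintype.card_fin, this]]
    push_cast; ring
  have CS : (∑ p : W × W, g p.1 p.2) ^ 2
      ≤ (Fintype.card (W × W) : ℝ) * ∑ p : W × W, (g p.1 p.2) ^ 2 := by
    have := sq_sum_le_card_mul_sum_sq (s := (Finset.univ : Finset (W × W)))
      (f := fun p => g p.1 p.2)
    simpa using this
  have hsum1 : (∑ p : W × W, g p.1 p.2) = ∑ u : W, ∑ v : W, g u v := by
    rw [Fintype.sum_prod_type]
  have hsum2 : (∑ p : W × W, (g p.1 p.2) ^ 2) = ∑ u : W, ∑ v : W, g u v ^ 2 := by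
    rw [Fintype.sum_prod_type]
  have hcard2 : (Fintype.card (W × W) : ℝ) = (n : ℝ) ^ (2 * k - 2) := by
    rw [Fintype.card_prod]
    push_cast
    rw [hcard, ← pow_add]
    congr 1
    omega
  calc S E j ^ 2 = (n : ℝ) ^ 2 * (∑ u : W, ∑ v : W, g u v) ^ 2 := by
        rw [key2]; ring
    _ ≤ (n : ℝ) ^ 2 * ((n : ℝ) ^ (2 * k - 2) * ∑ u : W, ∑ v : W, g u v ^ 2) := by
        apply mul_le_mul_of_nonneg_left _ (by positivity)
        rw [← hsum1, ← hsum2, ← hcard2]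
        exact CS
    _ = (n : ℝ) ^ (2 * k) * S E (j + 1) := by
        rw [key1, ← mul_assoc, ← pow_add]
        congr 2
        omega

lemma S_k_eq (E : Finset (Fin k → Fin n)) :
    S E k = ((Finset.univ.filter (fun p : (Fin k → Fin n) × (Fin k → Fin n) =>
      ∀ g : Fin k → Bool, (fun i => if g i then p.1 i else p.2 i) ∈ E)).card : ℝ) := by
  have h : ∀ x y : Fin k → Fin n, ∀ g : Fin k → Bool,
      tr k g x y = fun i => if g i then x i else y i := by
    intro x y g; funext i
    simp [tr, i.isLt]
  have hiff : ∀ p : (Fin k → Fin n) × (Fin k → Fin n),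
      F E k p.1 p.2 = if (∀ g : Fin k → Bool,
        (fun i => if g i then p.1 i else p.2 i) ∈ E) then (1:ℝ) else 0 := by
    intro p
    rw [F]
    congr 1
    rw [eq_iff_iff]
    constructor <;> intro hh g <;> [rw [← h p.1 p.2 g]; rw [h p.1 p.2 g]] <;> exact hh g
  rw [S, ← Fintype.sum_prod_type']
  simp_rw [hiff]
  rw [Finset.sum_boole]


lemma S_nonneg (E : Finset (Fin k → Fin n)) (j : ℕ) : 0 ≤ S E j :=
  Finset.sum_nonneg fun _ _ => Finset.sum_nonneg fun _ _ => F_nonneg E j _ _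

end BlowupAux

theorem many_blowup_copies (k : ℕ) (hk : 2 ≤ k) (d : ℝ) (hd0 : 0 < d) (hd1 : d ≤ 1) :
    ∃ n₀ : ℕ, ∀ n : ℕ, n₀ ≤ n →
      ∀ E : Finset (Fin k → Fin n),
        d * (n : ℝ) ^ k ≤ (E.card : ℝ) →
        d ^ (2 ^ k) * (n : ℝ) ^ (2 * k) / 2 ≤
          ((Finset.univ.filter (fun p : (Fin k → Fin n) × (Fin k → Fin n) =>
            (∀ i, p.1 i ≠ p.2 i) ∧
            ∀ g : Fin k → Bool, (fun i => if g i then p.1 i else p.2 i) ∈ E)).card : ℝ) := by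
  classical
  set c : ℝ := d ^ (2 ^ k) with hcdef
  have hc0 : 0 < c := pow_pos hd0 _
  refine ⟨Nat.ceil ((2 * k : ℝ) / c) + 1, fun n hn E hE => ?_⟩
  have hn1 : 1 ≤ n := le_trans (by omega) hn
  have hnR : (1 : ℝ) ≤ (n : ℝ) := by exact_mod_cast hn1
  have hnpos : (0 : ℝ) < (n : ℝ) := by linarith
  have h2k : (2 * k : ℝ) ≤ c * n := by
    have h1 : ((2 * k : ℝ) / c) ≤ (Nat.ceil ((2 * k : ℝ) / c) : ℝ) := Nat.le_ceil _
    have h2' : Nat.ceil ((2 * k : ℝ) / c) ≤ n := by omega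
    have h2 : ((Nat.ceil ((2 * k : ℝ) / c) : ℕ) : ℝ) ≤ (n : ℝ) := Nat.cast_le.mpr h2'
    have h3 := le_trans h1 h2
    rw [div_le_iff₀ hc0] at h3
    linarith
  -- the Cauchy–Schwarz invariant
  have inv : ∀ j, j ≤ k → d ^ (2 ^ j) * (n : ℝ) ^ (2 * k) ≤ BlowupAux.S E j := by
    intro j
    induction j with
    | zero =>
      intro _
      rw [BlowupAux.S_zero]
      have hps : (n : ℝ) ^ (2 * k) = (n : ℝ) ^ k * (n : ℝ) ^ k := by
        rw [← pow_add]; congr 1; ring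
      calc d ^ (2 ^ 0) * (n : ℝ) ^ (2 * k) = (n : ℝ) ^ k * (d * (n : ℝ) ^ k) := by
            rw [hps, pow_zero, pow_one]; ring
        _ ≤ (n : ℝ) ^ k * E.card := by
            apply mul_le_mul_of_nonneg_left hE (by positivity)
    | succ j ih =>
      intro hjk
      have hj : j < k := by omega
      have h1 := ih (by omega)
      have h2 := BlowupAux.step (n := n) E hj
      have ha : (0 : ℝ) ≤ d ^ (2 ^ j) * (n : ℝ) ^ (2 * k) := by positivity
      have h3 : (d ^ (2 ^ j) * (n : ℝ) ^ (2 * k)) ^ 2 ≤ BlowupAux.S E j ^ 2 :=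
        pow_le_pow_left₀ ha h1 2
      have h4 : (n : ℝ) ^ (2 * k) * (d ^ (2 ^ (j + 1)) * (n : ℝ) ^ (2 * k))
          ≤ (n : ℝ) ^ (2 * k) * BlowupAux.S E (j + 1) := by
        calc (n : ℝ) ^ (2 * k) * (d ^ (2 ^ (j + 1)) * (n : ℝ) ^ (2 * k))
            = (d ^ (2 ^ j) * (n : ℝ) ^ (2 * k)) ^ 2 := by
              rw [mul_pow, ← pow_mul]
              rw [show 2 ^ j * 2 = 2 ^ (j + 1) by rw [pow_succ]]
              ring
          _ ≤ BlowupAux.S E j ^ 2 := h3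
          _ ≤ (n : ℝ) ^ (2 * k) * BlowupAux.S E (j + 1) := h2
      exact le_of_mul_le_mul_left h4 (by positivity)
  have hSk := inv k le_rfl
  rw [BlowupAux.S_k_eq] at hSk
  -- split off degenerate pairs
  set A := Finset.univ.filter (fun p : (Fin k → Fin n) × (Fin k → Fin n) =>
    (∀ i, p.1 i ≠ p.2 i) ∧
    ∀ g : Fin k → Bool, (fun i => if g i then p.1 i else p.2 i) ∈ E) with hA
  set B := Finset.univ.filter (fun p : (Fin k → Fin n) × (Fin k → Fin n) =>
    ∀ g : Fin k → Bool, (fun i => if g i then p.1 i else p.2 i) ∈ E) with hB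
  set D := Finset.univ.filter (fun p : (Fin k → Fin n) × (Fin k → Fin n) =>
    ∃ i, p.1 i = p.2 i) with hD
  have hsub : B ⊆ A ∪ D := by
    intro p hp
    rw [Finset.mem_union, hA, hB] at *
    rw [Finset.mem_filter] at hp
    by_cases hdis : ∀ i, p.1 i ≠ p.2 i
    · exact Or.inl (Finset.mem_filter.mpr ⟨Finset.mem_univ _, hdis, hp.2⟩)
    · push_neg at hdis
      exact Or.inr (Finset.mem_filter.mpr ⟨Finset.mem_univ _, hdis⟩)
  -- each slice of D has at most n^(2k-1) elements
  have hCi : ∀ i : Fin k,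
      ((Finset.univ.filter (fun p : (Fin k → Fin n) × (Fin k → Fin n) =>
        p.1 i = p.2 i)).card : ℝ) ≤ (n : ℝ) ^ (2 * k - 1) := by
    intro i
    have hinj : ((Finset.univ.filter (fun p : (Fin k → Fin n) × (Fin k → Fin n) =>
        p.1 i = p.2 i)).card)
        ≤ (Finset.univ : Finset ((Fin k → Fin n) × ({l : Fin k // l ≠ i} → Fin n))).card := by
      apply Finset.card_le_card_of_injOn
        (fun p => (p.1, fun l => p.2 l.val))
        (fun _ _ => Finset.mem_univ _)
      intro p hp q hq heq
      rw [Finset.mem_coe, Finset.mem_filter] at hp hq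
      dsimp only at heq
      rw [Prod.ext_iff] at heq
      obtain ⟨h1, h2⟩ := heq
      refine Prod.ext h1 (funext fun l => ?_)
      rcases eq_or_ne l i with rfl | hl
      · rw [← hp.2, ← hq.2, h1]
      · exact congrFun h2 ⟨l, hl⟩
    have hcardT : ((Finset.univ : Finset ((Fin k → Fin n) ×
        ({l : Fin k // l ≠ i} → Fin n))).card : ℝ) = (n : ℝ) ^ (2 * k - 1) := by
      rw [Finset.card_univ, Fintype.card_prod, Fintype.card_fun, Fintype.card_fun,
        Fintype.card_subtype_compl, Fintype.card_subtype_eq]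
      simp only [Fintype.card_fin]
      push_cast
      rw [← pow_add]
      congr 1
      omega
    calc ((Finset.univ.filter (fun p : (Fin k → Fin n) × (Fin k → Fin n) =>
          p.1 i = p.2 i)).card : ℝ) ≤ _ := by exact_mod_cast hinj
      _ = (n : ℝ) ^ (2 * k - 1) := hcardT
  have hDcard : (D.card : ℝ) ≤ (k : ℝ) * (n : ℝ) ^ (2 * k - 1) := by
    have hsubD : D ⊆ Finset.univ.biUnion (fun i : Fin k =>
        Finset.univ.filter (fun p : (Fin k → Fin n) × (Fin k → Fin n) => p.1 i = p.2 i)) := by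
      intro p hp
      rw [hD, Finset.mem_filter] at hp
      obtain ⟨i, hi⟩ := hp.2
      exact Finset.mem_biUnion.mpr ⟨i, Finset.mem_univ _, Finset.mem_filter.mpr
        ⟨Finset.mem_univ _, hi⟩⟩
    calc (D.card : ℝ) ≤ ((Finset.univ.biUnion (fun i : Fin k =>
          Finset.univ.filter (fun p : (Fin k → Fin n) × (Fin k → Fin n) =>
            p.1 i = p.2 i))).card : ℝ) := by
          exact_mod_cast Finset.card_le_card hsubD
      _ ≤ ∑ i : Fin k, ((Finset.univ.filter (fun p : (Fin k → Fin n) × (Fin k → Fin n) =>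
            p.1 i = p.2 i)).card : ℝ) := by
          exact_mod_cast Finset.card_biUnion_le
      _ ≤ ∑ _i : Fin k, (n : ℝ) ^ (2 * k - 1) := Finset.sum_le_sum fun i _ => hCi i
      _ = (k : ℝ) * (n : ℝ) ^ (2 * k - 1) := by
          rw [Finset.sum_const, Finset.card_univ, Fintype.card_fin, nsmul_eq_mul]
  have hBcard : (B.card : ℝ) ≤ (A.card : ℝ) + (D.card : ℝ) := by
    calc (B.card : ℝ) ≤ ((A ∪ D).card : ℝ) := by exact_mod_cast Finset.card_le_card hsub
      _ ≤ (A.card : ℝ) + (D.card : ℝ) := by exact_mod_cast Finset.card_union_le A D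
  -- final arithmetic
  have hhalf : (k : ℝ) * (n : ℝ) ^ (2 * k - 1) ≤ c * (n : ℝ) ^ (2 * k) / 2 := by
    have hpow : (n : ℝ) ^ (2 * k) = (n : ℝ) ^ (2 * k - 1) * n := by
      rw [← pow_succ]
      congr 1
      omega
    have hp0 : (0 : ℝ) ≤ (n : ℝ) ^ (2 * k - 1) := by positivity
    calc (k : ℝ) * (n : ℝ) ^ (2 * k - 1) = (2 * k : ℝ) * (n : ℝ) ^ (2 * k - 1) / 2 := by ring
      _ ≤ (c * n) * (n : ℝ) ^ (2 * k - 1) / 2 := by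
          apply div_le_div_of_nonneg_right _ (by norm_num)
          · exact mul_le_mul_of_nonneg_right h2k hp0
      _ = c * (n : ℝ) ^ (2 * k) / 2 := by rw [hpow]; ring
  have : c * (n : ℝ) ^ (2 * k) ≤ (A.card : ℝ) + c * (n : ℝ) ^ (2 * k) / 2 := by
    calc c * (n : ℝ) ^ (2 * k) ≤ (B.card : ℝ) := hSk
      _ ≤ (A.card : ℝ) + (D.card : ℝ) := hBcard
      _ ≤ (A.card : ℝ) + c * (n : ℝ) ^ (2 * k) / 2 := by linarith
  linarith
end

section
/- Let n, d ∈ ℕ and let G be an edge-coloured multigraph on n vertices with δ_mon(G) ≥ d ≥ 4·|φ(G)|. Then there exists a rainbow path system 𝒫 in G such that φ(𝒫) = φ(G) and |𝒫| ≤ 2n/d. -/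
/-- An edge-coloured multigraph on `Fin n` is modelled as a family `G : γ → SimpleGraph (Fin n)`
of colour classes: `G c` is the simple graph formed by the edges of colour `c` (parallel edges
get distinct colours).  `(s, cs)` is a rainbow cycle with vertex set `s` and colour set `cs`:
either a single edge (a degenerate cycle), or a cyclic sequence of at least two distinct
vertices in which consecutive vertices are joined by edges of pairwise distinct colours. -/
def IsRainbowCycle {n : ℕ} {γ : Type*} [DecidableEq γ] (G : γ → SimpleGraph (Fin n))
    (s : Finset (Fin n)) (cs : Finset γ) : Prop :=
  (∃ (u v : Fin n) (c : γ), (G c).Adj u v ∧ s = {u, v} ∧ cs = {c}) ∨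
  (∃ (m : ℕ) (f : ℕ → Fin n) (col : ℕ → γ),
    2 ≤ m ∧ m = s.card ∧
    (∀ i, f (i + m) = f i) ∧ Set.InjOn f (Set.Iio m) ∧ (Finset.range m).image f = s ∧
    (∀ i, col (i + m) = col i) ∧ Set.InjOn col (Set.Iio m) ∧
    (Finset.range m).image col = cs ∧
    ∀ i, (G (col i)).Adj (f i) (f (i + 1)))

/-- `(s, cs)` is a rainbow path with vertex set `s` and colour set `cs` in the edge-coloured
multigraph given by the family `G` of colour classes: a sequence of `m ≥ 2` distinct vertices
in which consecutive vertices are joined by edges of pairwise distinct colours. -/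
def IsRainbowPath {n : ℕ} {γ : Type*} [DecidableEq γ] (G : γ → SimpleGraph (Fin n))
    (s : Finset (Fin n)) (cs : Finset γ) : Prop :=
  ∃ (m : ℕ) (f : ℕ → Fin n) (col : ℕ → γ),
    2 ≤ m ∧ m = s.card ∧
    Set.InjOn f (Set.Iio m) ∧ (Finset.range m).image f = s ∧
    Set.InjOn col (Set.Iio (m - 1)) ∧ (Finset.range (m - 1)).image col = cs ∧
    ∀ i < m - 1, (G (col i)).Adj (f i) (f (i + 1))

namespace RainbowAuxPathSys

open Finset

set_option linter.unusedSectionVars false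
set_option linter.unusedVariables false
set_option maxHeartbeats 1000000

variable {n : ℕ} {γ : Type} [DecidableEq γ]

noncomputable def NB (G : γ → SimpleGraph (Fin n)) (c : γ) (x : Fin n) : Finset (Fin n) :=
  (Set.toFinite ((G c).neighborSet x)).toFinset

noncomputable def SUP (G : γ → SimpleGraph (Fin n)) (c : γ) : Finset (Fin n) :=
  (Set.toFinite ((G c).support)).toFinset

lemma mem_NB {G : γ → SimpleGraph (Fin n)} {c : γ} {x y : Fin n} :
    y ∈ NB G c x ↔ (G c).Adj x y := by
  simp [NB, SimpleGraph.mem_neighborSet]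

lemma mem_SUP {G : γ → SimpleGraph (Fin n)} {c : γ} {x : Fin n} :
    x ∈ SUP G c ↔ ∃ y, (G c).Adj x y := by
  simp [SUP, SimpleGraph.mem_support]

lemma NB_subset_SUP {G : γ → SimpleGraph (Fin n)} {c : γ} {x : Fin n} :
    NB G c x ⊆ SUP G c := by
  intro y hy; rw [mem_NB] at hy; rw [mem_SUP]; exact ⟨x, hy.symm⟩

lemma card_NB {G : γ → SimpleGraph (Fin n)} {d : ℕ}
    (hdeg : ∀ (c : γ) (v : Fin n), ((G c).neighborSet v).Nonempty →
      d ≤ ((G c).neighborSet v).ncard)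
    {c : γ} {x : Fin n} (hx : x ∈ SUP G c) : d ≤ (NB G c x).card := by
  rw [mem_SUP] at hx
  obtain ⟨y, hy⟩ := hx
  have h := hdeg c x ⟨y, hy⟩
  rwa [Set.ncard_eq_toFinset_card _ (Set.toFinite _)] at h

lemma card_SUP {G : γ → SimpleGraph (Fin n)} {d : ℕ}
    (hdeg : ∀ (c : γ) (v : Fin n), ((G c).neighborSet v).Nonempty →
      d ≤ ((G c).neighborSet v).ncard)
    {c : γ} {x : Fin n} (hx : x ∈ SUP G c) : d + 1 ≤ (SUP G c).card := by
  have h1 : insert x (NB G c x) ⊆ SUP G c := by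
    intro y hy
    rcases Finset.mem_insert.1 hy with rfl | hy
    · exact hx
    · exact NB_subset_SUP hy
  have h2 : x ∉ NB G c x := by
    rw [mem_NB]; exact fun h => (G c).irrefl h
  calc d + 1 ≤ (NB G c x).card + 1 := by
        have := card_NB hdeg hx; omega
    _ = (insert x (NB G c x)).card := (Finset.card_insert_of_notMem h2).symm
    _ ≤ (SUP G c).card := Finset.card_le_card h1

/-- Base case of path building: the path is stuck at `x` (with pending colour `c`). -/
lemma piece_base {G : γ → SimpleGraph (Fin n)} {d : ℕ}
    (hdeg : ∀ (c : γ) (v : Fin n), ((G c).neighborSet v).Nonempty →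
      d ≤ ((G c).neighborSet v).ncard)
    (R : Finset γ) (U : Finset (Fin n)) (c : γ) (x : Fin n)
    (hcR : c ∉ R) (hxU : x ∈ U) (hxS : x ∈ SUP G c) (hUd : U.card < d)
    (hstuck : ∀ c' ∈ R, ∀ y, y ∈ NB G c x → y ∉ U → y ∉ SUP G c') :
    ∃ (m : ℕ) (f : ℕ → Fin n) (col : ℕ → γ) (W : Finset (Fin n)),
      2 ≤ m ∧ f 0 = x ∧ col 0 = c ∧
      Set.InjOn f (Set.Iio (m : ℕ)) ∧ (∀ i, 1 ≤ i → i < m → f i ∉ U) ∧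
      Set.InjOn col (Set.Iio (m - 1 : ℕ)) ∧ (∀ i, 1 ≤ i → i < m - 1 → col i ∈ R) ∧
      (∀ i, i < m - 1 → (G (col i)).Adj (f i) (f (i + 1))) ∧
      (∃ j, j < m - 1 ∧ W ⊆ SUP G (col j)) ∧
      (∀ c', c' ∈ R → (∀ j, j < m - 1 → col j ≠ c') → Disjoint W (SUP G c')) ∧
      d ≤ W.card + U.card + (m - 2) := by
  have hcard : d ≤ (NB G c x).card := card_NB hdeg hxS
  have hne : (NB G c x \ U).Nonempty := by
    rw [← Finset.card_pos]
    have := Finset.card_le_card_sdiff_add_card (s := NB G c x) (t := U)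
    omega
  obtain ⟨y₀, hy₀⟩ := hne
  have hy₀N : y₀ ∈ NB G c x := (Finset.mem_sdiff.1 hy₀).1
  have hy₀U : y₀ ∉ U := (Finset.mem_sdiff.1 hy₀).2
  refine ⟨2, fun i => if i = 0 then x else y₀, fun _ => c, NB G c x \ U, le_refl 2,
    rfl, rfl, ?_, ?_, ?_, by omega, ?_, ⟨0, by omega, ?_⟩, ?_, ?_⟩
  · -- InjOn f
    intro i hi j hj hij
    simp only [Set.mem_Iio] at hi hj
    have hxy : x ≠ y₀ := fun h => hy₀U (h ▸ hxU)
    interval_cases i <;> interval_cases j <;> simp_all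
  · intro i h1 h2
    interval_cases i
    simp [hy₀U]
  · intro i hi j hj hij
    simp only [Set.mem_Iio] at hi hj
    omega
  · intro i hi
    have : i = 0 := by omega
    subst this
    simpa using mem_NB.1 hy₀N
  · exact fun z hz => NB_subset_SUP (Finset.mem_sdiff.1 hz).1
  · intro c' hc' _
    rw [Finset.disjoint_left]
    intro y hy hyS
    exact hstuck c' hc' y (Finset.mem_sdiff.1 hy).1 (Finset.mem_sdiff.1 hy).2 hyS
  · have := Finset.card_le_card_sdiff_add_card (s := NB G c x) (t := U)
    omega

/-- Build a maximal rainbow path segment from pinned vertex `x`, pending colour `c`. -/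
lemma piece {G : γ → SimpleGraph (Fin n)} {d k : ℕ}
    (hdeg : ∀ (c : γ) (v : Fin n), ((G c).neighborSet v).Nonempty →
      d ≤ ((G c).neighborSet v).ncard)
    (hd4 : 4 * k ≤ d) (hk : 1 ≤ k) :
    ∀ (N : ℕ) (R : Finset γ) (U : Finset (Fin n)) (c : γ) (x : Fin n),
      R.card ≤ N → c ∉ R → x ∈ U → x ∈ SUP G c →
      U.card + 2 * R.card ≤ 2 * k →
      ∃ (m : ℕ) (f : ℕ → Fin n) (col : ℕ → γ) (W : Finset (Fin n)),
        2 ≤ m ∧ f 0 = x ∧ col 0 = c ∧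
        Set.InjOn f (Set.Iio (m : ℕ)) ∧ (∀ i, 1 ≤ i → i < m → f i ∉ U) ∧
        Set.InjOn col (Set.Iio (m - 1 : ℕ)) ∧ (∀ i, 1 ≤ i → i < m - 1 → col i ∈ R) ∧
        (∀ i, i < m - 1 → (G (col i)).Adj (f i) (f (i + 1))) ∧
        (∃ j, j < m - 1 ∧ W ⊆ SUP G (col j)) ∧
        (∀ c', c' ∈ R → (∀ j, j < m - 1 → col j ≠ c') → Disjoint W (SUP G c')) ∧
        d ≤ W.card + U.card + (m - 2) := by
  intro N
  induction N with
  | zero =>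
    intro R U c x hRN hcR hxU hxS hinv
    have hR : R = ∅ := Finset.card_eq_zero.1 (le_antisymm hRN (Nat.zero_le _))
    subst hR
    refine piece_base hdeg ∅ U c x hcR hxU hxS (by omega) (by simp)
  | succ N ih =>
    intro R U c x hRN hcR hxU hxS hinv
    by_cases hext : ∃ c' ∈ R, ∃ y, y ∈ NB G c x ∧ y ∈ SUP G c' ∧ y ∉ U
    · obtain ⟨c', hc'R, y, hyN, hyS, hyU⟩ := hext
      have hcy : (G c).Adj x y := mem_NB.1 hyN
      have hcR' : c' ∉ R.erase c' := Finset.notMem_erase _ _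
      have hcard' : (R.erase c').card = R.card - 1 := Finset.card_erase_of_mem hc'R
      have hRpos : 1 ≤ R.card := Finset.card_pos.2 ⟨c', hc'R⟩
      obtain ⟨m', f', col', W, hm2, hf0, hcol0, hfInj, hfU, hcolInj, hcolR, hadj,
          hWsub, hWdisj, hWcard⟩ :=
        ih (R.erase c') (insert y U) c' y (by omega) hcR' (Finset.mem_insert_self _ _)
          hyS (by rw [Finset.card_insert_of_notMem hyU]; omega)
      refine ⟨m' + 1, fun i => if i = 0 then x else f' (i - 1),
        fun i => if i = 0 then c else col' (i - 1), W, by omega, rfl, rfl,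
        ?_, ?_, ?_, ?_, ?_, ?_, ?_, ?_⟩
      · -- InjOn f
        have hf'notU : ∀ j, j < m' → f' j ∉ U := by
          intro j hj
          rcases Nat.eq_zero_or_pos j with rfl | hjpos
          · rw [hf0]; exact hyU
          · intro hmem
            exact hfU j hjpos hj (Finset.mem_insert_of_mem hmem)
        intro i hi j hj hij
        simp only [Set.mem_Iio] at hi hj
        rcases Nat.eq_zero_or_pos i with rfl | hipos <;>
          rcases Nat.eq_zero_or_pos j with rfl | hjpos
        · rfl
        · exfalso
          simp only [if_pos rfl, if_neg (by omega : ¬ j = 0)] at hij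
          exact hf'notU (j-1) (by omega) (hij ▸ hxU)
        · exfalso
          simp only [if_pos rfl, if_neg (by omega : ¬ i = 0)] at hij
          exact hf'notU (i-1) (by omega) (hij.symm ▸ hxU)
        · simp only [if_neg (by omega : ¬ i = 0), if_neg (by omega : ¬ j = 0)] at hij
          have := hfInj (Set.mem_Iio.2 (by omega : i - 1 < m'))
            (Set.mem_Iio.2 (by omega : j - 1 < m')) hij
          omega
      · -- f i ∉ U
        intro i h1 h2
        simp only [if_neg (by omega : ¬ i = 0)]
        rcases Nat.eq_zero_or_pos (i - 1) with h | hpos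
        · rw [h, hf0]; exact hyU
        · intro hmem
          exact hfU (i-1) hpos (by omega) (Finset.mem_insert_of_mem hmem)
      · -- InjOn col
        have hcol'notc : ∀ j, j < m' - 1 → col' j ≠ c := by
          intro j hj
          rcases Nat.eq_zero_or_pos j with rfl | hjpos
          · rw [hcol0]; intro h; exact hcR (h ▸ hc'R)
          · intro h
            exact hcR (h ▸ Finset.mem_of_mem_erase (hcolR j hjpos hj))
        intro i hi j hj hij
        simp only [Set.mem_Iio] at hi hj
        have hm1 : m' + 1 - 1 = m' := by omega
        rw [hm1] at hi hj
        rcases Nat.eq_zero_or_pos i with rfl | hipos <;>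
          rcases Nat.eq_zero_or_pos j with rfl | hjpos
        · rfl
        · exfalso
          simp only [if_pos rfl, if_neg (by omega : ¬ j = 0)] at hij
          exact hcol'notc (j-1) (by omega) hij.symm
        · exfalso
          simp only [if_pos rfl, if_neg (by omega : ¬ i = 0)] at hij
          exact hcol'notc (i-1) (by omega) hij
        · simp only [if_neg (by omega : ¬ i = 0), if_neg (by omega : ¬ j = 0)] at hij
          have := hcolInj (Set.mem_Iio.2 (by omega : i - 1 < m' - 1))
            (Set.mem_Iio.2 (by omega : j - 1 < m' - 1)) hij
          omega
      · -- col i ∈ R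
        intro i h1 h2
        simp only [if_neg (by omega : ¬ i = 0)]
        rcases Nat.eq_zero_or_pos (i - 1) with h | hpos
        · rw [h, hcol0]; exact hc'R
        · exact Finset.mem_of_mem_erase (hcolR (i-1) hpos (by omega))
      · -- adjacency
        intro i hi
        rcases Nat.eq_zero_or_pos i with rfl | hipos
        · simpa [hf0] using hcy
        · have h1 : ¬ i = 0 := by omega
          have h2 : ¬ i + 1 = 0 := by omega
          simp only [if_neg h1, if_neg h2]
          have : i + 1 - 1 = (i - 1) + 1 := by omega
          rw [this]
          exact hadj (i-1) (by omega)
      · -- W ⊆ SUP (col j)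
        obtain ⟨j, hj, hsub⟩ := hWsub
        refine ⟨j + 1, by omega, ?_⟩
        simpa using hsub
      · -- Disjoint
        intro c'' hc'' hne
        have h1 : c'' ≠ c' := by
          have := hne 1 (by omega)
          simp only [if_neg (by omega : ¬ (1:ℕ) = 0)] at this
          rw [hcol0] at this
          exact fun h => this h.symm
        refine hWdisj c'' (Finset.mem_erase.2 ⟨h1, hc''⟩) ?_
        intro j hj
        have := hne (j+1) (by omega)
        simpa using this
      · -- card
        rw [Finset.card_insert_of_notMem hyU] at hWcard
        omega
    · push_neg at hext
      refine piece_base hdeg R U c x hcR hxU hxS (by omega) ?_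
      intro c' hc' y hyN hyU hyS
      exact hyU (hext c' hc' y hyN hyS)

lemma main_rec [Fintype γ] {G : γ → SimpleGraph (Fin n)} {d : ℕ}
    (hcol : ∀ c : γ, (G c).edgeSet.Nonempty)
    (hdeg : ∀ (c : γ) (v : Fin n), ((G c).neighborSet v).Nonempty →
      d ≤ ((G c).neighborSet v).ncard)
    (hd4 : 4 * Fintype.card γ ≤ d) :
    ∀ (N : ℕ) (R : Finset γ) (U : Finset (Fin n)), R.card ≤ N →
      U.card + 2 * R.card ≤ 2 * Fintype.card γ →
      ∃ (t : ℕ) (S : Fin t → Finset (Fin n)) (K : Fin t → Finset γ)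
        (W : Fin t → Finset (Fin n)),
        (∀ a, IsRainbowPath G (S a) (K a)) ∧
        (∀ a, Disjoint (S a) U) ∧
        (∀ a b, a ≠ b → Disjoint (S a) (S b)) ∧
        (∀ a b, a ≠ b → Disjoint (K a) (K b)) ∧
        Finset.univ.biUnion K = R ∧
        (∀ a, ∃ c ∈ K a, W a ⊆ SUP G c) ∧
        (∀ a b, a ≠ b → Disjoint (W a) (W b)) ∧
        (∀ a, d ≤ 2 * (W a).card) := by
  intro N
  induction N with
  | zero =>
    intro R U hRN hinv
    have hR : R = ∅ := Finset.card_eq_zero.1 (le_antisymm hRN (Nat.zero_le _))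
    subst hR
    exact ⟨0, Fin.elim0, Fin.elim0, Fin.elim0, fun a => a.elim0, fun a => a.elim0,
      fun a => a.elim0, fun a => a.elim0, by simp, fun a => a.elim0, fun a => a.elim0,
      fun a => a.elim0⟩
  | succ N ih =>
    intro R U hRN hinv
    rcases R.eq_empty_or_nonempty with rfl | ⟨c, hcR⟩
    · exact ⟨0, Fin.elim0, Fin.elim0, Fin.elim0, fun a => a.elim0, fun a => a.elim0,
        fun a => a.elim0, fun a => a.elim0, by simp, fun a => a.elim0, fun a => a.elim0,
        fun a => a.elim0⟩
    · have hk : 1 ≤ Fintype.card γ := Fintype.card_pos_iff.2 ⟨c⟩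
      have hRpos : 1 ≤ R.card := Finset.card_pos.2 ⟨c, hcR⟩
      have hsup_ne : ∃ u, u ∈ SUP G c := by
        obtain ⟨e, he⟩ := hcol c
        induction e using Sym2.ind with
        | _ u v => exact ⟨u, mem_SUP.2 ⟨v, he⟩⟩
      obtain ⟨u, hu⟩ := hsup_ne
      have hSUPcard : d + 1 ≤ (SUP G c).card := card_SUP hdeg hu
      have hx_ne : (SUP G c \ U).Nonempty := by
        rw [← Finset.card_pos]
        have h1 := Finset.card_le_card_sdiff_add_card (s := SUP G c) (t := U)
        omega
      obtain ⟨x, hx⟩ := hx_ne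
      have hxS : x ∈ SUP G c := (Finset.mem_sdiff.1 hx).1
      have hxU : x ∉ U := (Finset.mem_sdiff.1 hx).2
      obtain ⟨m, f, col, W₀, hm2, hf0, hcol0, hfInj, hfU, hcolInj, hcolR, hadj,
          hWsub, hWdisj, hWcard⟩ :=
        piece hdeg hd4 hk (R.erase c).card (R.erase c) (insert x U) c x le_rfl
          (Finset.notMem_erase _ _) (Finset.mem_insert_self _ _) hxS
          (by rw [Finset.card_insert_of_notMem hxU, Finset.card_erase_of_mem hcR]; omega)
      set s : Finset (Fin n) := (Finset.range m).image f with hs_def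
      set cs : Finset γ := (Finset.range (m-1)).image col with hcs_def
      have hscard : s.card = m := by
        rw [hs_def, Finset.card_image_of_injOn (by rwa [Finset.coe_range]), Finset.card_range]
      have hcscard : cs.card = m - 1 := by
        rw [hcs_def, Finset.card_image_of_injOn (by rwa [Finset.coe_range]), Finset.card_range]
      have hcs_sub : cs ⊆ R := by
        intro c'' hc''
        rw [hcs_def, Finset.mem_image] at hc''
        obtain ⟨j, hj, rfl⟩ := hc''
        rw [Finset.mem_range] at hj
        rcases Nat.eq_zero_or_pos j with rfl | hjpos
        · rwa [hcol0]
        · exact Finset.mem_of_mem_erase (hcolR j hjpos hj)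
      have hc_in_cs : c ∈ cs := by
        rw [hcs_def, Finset.mem_image]
        exact ⟨0, Finset.mem_range.2 (by omega), hcol0⟩
      have hpath : IsRainbowPath G s cs :=
        ⟨m, f, col, hm2, hscard.symm, hfInj, rfl, hcolInj, rfl, hadj⟩
      have hsU : Disjoint s U := by
        rw [Finset.disjoint_left]
        intro z hz hzU
        rw [hs_def, Finset.mem_image] at hz
        obtain ⟨i, hi, rfl⟩ := hz
        rw [Finset.mem_range] at hi
        rcases Nat.eq_zero_or_pos i with rfl | hipos
        · rw [hf0] at hzU; exact hxU hzU
        · exact hfU i hipos hi (Finset.mem_insert_of_mem hzU)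
      have hR''card : (R \ cs).card = R.card - (m - 1) := by
        rw [Finset.card_sdiff_of_subset hcs_sub, hcscard]
      have hm1R : m - 1 ≤ R.card := by
        rw [← hcscard]; exact Finset.card_le_card hcs_sub
      have hU''card : (U ∪ s).card ≤ U.card + m := by
        have := Finset.card_union_le U s
        omega
      obtain ⟨t', S', K', W', hP', hU', hSS', hKK', hbi', hWsub', hWW', hWcard'⟩ :=
        ih (R \ cs) (U ∪ s) (by omega) (by omega)
      refine ⟨t' + 1, Fin.cons s S', Fin.cons cs K', Fin.cons W₀ W',
        ?_, ?_, ?_, ?_, ?_, ?_, ?_, ?_⟩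
      · intro a
        induction a using Fin.cases with
        | zero => simpa using hpath
        | succ b => simpa using hP' b
      · intro a
        induction a using Fin.cases with
        | zero => simpa using hsU
        | succ b =>
          simp only [Fin.cons_succ]
          exact (Finset.disjoint_union_right.1 (hU' b)).1
      · intro a b hab
        induction a using Fin.cases with
        | zero =>
          induction b using Fin.cases with
          | zero => exact absurd rfl hab
          | succ b' =>
            simp only [Fin.cons_zero, Fin.cons_succ]
            exact ((Finset.disjoint_union_right.1 (hU' b')).2).symm
        | succ a' =>
          induction b using Fin.cases with
          | zero =>
            simp only [Fin.cons_zero, Fin.cons_succ]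
            exact (Finset.disjoint_union_right.1 (hU' a')).2
          | succ b' =>
            simp only [Fin.cons_succ]
            exact hSS' a' b' (fun h => hab (congrArg Fin.succ h))
      · intro a b hab
        have hKsub : ∀ b', K' b' ⊆ R \ cs := by
          intro b'
          rw [← hbi']
          exact Finset.subset_biUnion_of_mem K' (Finset.mem_univ b')
        induction a using Fin.cases with
        | zero =>
          induction b using Fin.cases with
          | zero => exact absurd rfl hab
          | succ b' =>
            simp only [Fin.cons_zero, Fin.cons_succ]
            exact (Finset.sdiff_disjoint.symm).mono_right (hKsub b')
        | succ a' =>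
          induction b using Fin.cases with
          | zero =>
            simp only [Fin.cons_zero, Fin.cons_succ]
            exact (Finset.sdiff_disjoint.mono_left (hKsub a')).symm.symm
          | succ b' =>
            simp only [Fin.cons_succ]
            exact hKK' a' b' (fun h => hab (congrArg Fin.succ h))
      · have h1 : Finset.univ.biUnion (Fin.cons cs K' : Fin (t'+1) → Finset γ)
            = cs ∪ Finset.univ.biUnion K' := by
          ext z
          simp [Finset.mem_biUnion, Fin.exists_fin_succ]
        rw [h1, hbi', Finset.union_sdiff_of_subset hcs_sub]
      · intro a
        induction a using Fin.cases with
        | zero =>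
          obtain ⟨j, hj, hsub⟩ := hWsub
          refine ⟨col j, ?_, ?_⟩
          · simp only [Fin.cons_zero]
            rw [hcs_def, Finset.mem_image]
            exact ⟨j, Finset.mem_range.2 hj, rfl⟩
          · simpa using hsub
        | succ b => simpa using hWsub' b
      · intro a b hab
        have key : ∀ b', Disjoint W₀ (W' b') := by
          intro b'
          obtain ⟨cᵣ, hcᵣK, hcᵣsub⟩ := hWsub' b'
          have hcᵣR'' : cᵣ ∈ R \ cs := by
            have : K' b' ⊆ R \ cs := by
              rw [← hbi']
              exact Finset.subset_biUnion_of_mem K' (Finset.mem_univ b')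
            exact this hcᵣK
          have hcᵣR : cᵣ ∈ R := (Finset.mem_sdiff.1 hcᵣR'').1
          have hcᵣcs : cᵣ ∉ cs := (Finset.mem_sdiff.1 hcᵣR'').2
          have hcᵣc : cᵣ ≠ c := fun h => hcᵣcs (h ▸ hc_in_cs)
          have hdisj : Disjoint W₀ (SUP G cᵣ) := by
            refine hWdisj cᵣ (Finset.mem_erase.2 ⟨hcᵣc, hcᵣR⟩) ?_
            intro j hj hcontra
            apply hcᵣcs
            rw [hcs_def, Finset.mem_image]
            exact ⟨j, Finset.mem_range.2 hj, hcontra⟩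
          exact hdisj.mono_right hcᵣsub
        induction a using Fin.cases with
        | zero =>
          induction b using Fin.cases with
          | zero => exact absurd rfl hab
          | succ b' =>
            simp only [Fin.cons_zero, Fin.cons_succ]
            exact key b'
        | succ a' =>
          induction b using Fin.cases with
          | zero =>
            simp only [Fin.cons_zero, Fin.cons_succ]
            exact (key a').symm
          | succ b' =>
            simp only [Fin.cons_succ]
            exact hWW' a' b' (fun h => hab (congrArg Fin.succ h))
      · intro a
        induction a using Fin.cases with
        | zero =>
          simp only [Fin.cons_zero]
          rw [Finset.card_insert_of_notMem hxU] at hWcard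
          omega
        | succ b => simpa using hWcard' b

end RainbowAuxPathSys

theorem rainbow_path_system (n d : ℕ) (γ : Type) [Fintype γ] [DecidableEq γ]
    (G : γ → SimpleGraph (Fin n))
    (hcol : ∀ c : γ, (G c).edgeSet.Nonempty)
    (hdeg : ∀ (c : γ) (v : Fin n), ((G c).neighborSet v).Nonempty →
      d ≤ ((G c).neighborSet v).ncard)
    (hd : 4 * Fintype.card γ ≤ d) :
    ∃ (t : ℕ) (S : Fin t → Finset (Fin n)) (K : Fin t → Finset γ),
      (∀ a, IsRainbowPath G (S a) (K a)) ∧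
      (∀ a b, a ≠ b → Disjoint (S a) (S b)) ∧
      (∀ a b, a ≠ b → Disjoint (K a) (K b)) ∧
      Finset.univ.biUnion K = Finset.univ ∧
      (t : ℝ) ≤ 2 * n / d := by
  obtain ⟨t, S, K, W, hP, hSU, hSS, hKK, hbi, hWsub, hWW, hWcard⟩ :=
    RainbowAuxPathSys.main_rec hcol hdeg hd (Fintype.card γ) Finset.univ ∅
      (by rw [Finset.card_univ]) (by simp [Finset.card_univ])
  refine ⟨t, S, K, hP, hSS, hKK, hbi, ?_⟩
  rcases Nat.eq_zero_or_pos t with rfl | htpos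
  · simp only [Nat.cast_zero]
    positivity
  · have a₀ : Fin t := ⟨0, htpos⟩
    obtain ⟨m, f, col, hm2, _, _, _, _, hcs, _⟩ := hP a₀
    have hne : (K a₀).Nonempty := by
      rw [← hcs]
      exact ⟨col 0, Finset.mem_image.2 ⟨0, Finset.mem_range.2 (by omega), rfl⟩⟩
    obtain ⟨c₀, hc₀⟩ := hne
    have hγ : 1 ≤ Fintype.card γ := Fintype.card_pos_iff.2 ⟨c₀⟩
    have hd4 : 4 ≤ d := le_trans (by omega) hd
    have hsum : t * d ≤ 2 * n := by
      have h1 : (Finset.univ.biUnion W).card = ∑ a, (W a).card :=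
        Finset.card_biUnion (fun a _ b _ hab => hWW a b hab)
      have h2 : (Finset.univ.biUnion W).card ≤ n := by
        calc (Finset.univ.biUnion W).card
            ≤ (Finset.univ : Finset (Fin n)).card :=
              Finset.card_le_card (Finset.subset_univ _)
          _ = n := by simp
      have h3 : t * d ≤ ∑ a : Fin t, 2 * (W a).card := by
        calc t * d = ∑ _a : Fin t, d := by
              rw [Finset.sum_const, Finset.card_univ, Fintype.card_fin, smul_eq_mul, mul_comm]
          _ ≤ _ := Finset.sum_le_sum (fun a _ => hWcard a)
      rw [← Finset.mul_sum] at h3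
      omega
    rw [le_div_iff₀ (by exact_mod_cast (by omega : 0 < d) : (0:ℝ) < d)]
    exact_mod_cast hsum
end

section
/- Let G be an edge-coloured multigraph with δ_mon(G) ≥ 2·|φ(G)| − 1. Then G contains a rainbow matching M with φ(M) = φ(G), i.e., a matching whose edges have pairwise distinct colours and which uses every colour of G. -/
lemma exists_edge_avoiding {n : ℕ} (G' : SimpleGraph (Fin n)) (h1 : G'.edgeSet.Nonempty)
    (B : Finset (Fin n)) (hd : ∀ v : Fin n, (G'.neighborSet v).Nonempty →
      B.card < (G'.neighborSet v).ncard) :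
    ∃ a b : Fin n, G'.Adj a b ∧ a ∉ B ∧ b ∉ B := by
  obtain ⟨e, he⟩ := h1
  induction e using Sym2.inductionOn with
  | hf x y =>
    rw [SimpleGraph.mem_edgeSet] at he
    have hy : (G'.neighborSet y).Nonempty := ⟨x, he.symm⟩
    have h2 : ((G'.neighborSet y) \ ↑B).Nonempty := by
      rw [Set.nonempty_iff_ne_empty]
      intro hcon
      have hsub : G'.neighborSet y ⊆ ↑B := by rwa [Set.diff_eq_empty] at hcon
      have := Set.ncard_le_ncard hsub B.finite_toSet
      rw [Set.ncard_coe_finset] at this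
      exact absurd this (not_le.mpr (hd y hy))
    obtain ⟨a, ha, haB⟩ := h2
    have ha' : (G'.neighborSet a).Nonempty := ⟨y, (SimpleGraph.mem_neighborSet _ _ _).mp ha |>.symm⟩
    have h3 : ((G'.neighborSet a) \ ↑B).Nonempty := by
      rw [Set.nonempty_iff_ne_empty]
      intro hcon
      have hsub : G'.neighborSet a ⊆ ↑B := by rwa [Set.diff_eq_empty] at hcon
      have := Set.ncard_le_ncard hsub B.finite_toSet
      rw [Set.ncard_coe_finset] at this
      exact absurd this (not_le.mpr (hd a ha'))
    obtain ⟨b, hb, hbB⟩ := h3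
    exact ⟨a, b, hb, by simpa using haB, by simpa using hbB⟩


theorem rainbow_matching_all_colours (n : ℕ) (γ : Type) [Fintype γ] [DecidableEq γ]
    (G : γ → SimpleGraph (Fin n))
    (hcol : ∀ c : γ, (G c).edgeSet.Nonempty)
    (hdeg : ∀ (c : γ) (v : Fin n), ((G c).neighborSet v).Nonempty →
      2 * Fintype.card γ - 1 ≤ ((G c).neighborSet v).ncard) :
    ∃ u v : γ → Fin n,
      (∀ c, (G c).Adj (u c) (v c)) ∧
      (∀ c c' : γ, c ≠ c' → ({u c, v c} : Finset (Fin n)) ∩ {u c', v c'} = ∅) := by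
  rcases isEmpty_or_nonempty γ with hγ | hγ
  · exact ⟨isEmptyElim, isEmptyElim, fun c => isEmptyElim c, fun c => isEmptyElim c⟩
  have hcard : 1 ≤ Fintype.card γ := Fintype.card_pos
  -- get a default vertex
  obtain ⟨e0, he0⟩ := hcol (Classical.arbitrary γ)
  have hn : 0 < n := by
    induction e0 using Sym2.inductionOn with
    | hf x y => exact x.pos
  set v0 : Fin n := ⟨0, hn⟩
  -- main induction
  have key : ∀ S : Finset γ, ∃ u v : γ → Fin n,
      (∀ c ∈ S, (G c).Adj (u c) (v c)) ∧
      (∀ c ∈ S, ∀ c' ∈ S, c ≠ c' →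
        ({u c, v c} : Finset (Fin n)) ∩ {u c', v c'} = ∅) := by
    intro S
    induction S using Finset.induction_on with
    | empty => exact ⟨fun _ => v0, fun _ => v0, by simp, by simp⟩
    | @insert c S hcS ih =>
      obtain ⟨u, v, hadj, hdisj⟩ := ih
      set B : Finset (Fin n) := S.biUnion (fun c' => {u c', v c'}) with hB
      have hBcard : B.card ≤ 2 * S.card := by
        calc B.card ≤ ∑ c' ∈ S, ({u c', v c'} : Finset (Fin n)).card :=
              Finset.card_biUnion_le
          _ ≤ ∑ _c' ∈ S, 2 := Finset.sum_le_sum (fun c' _ => Finset.card_insert_le _ _ |>.trans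
              (by simp))
          _ = 2 * S.card := by rw [Finset.sum_const, smul_eq_mul, mul_comm]
      have hScard : S.card + 1 ≤ Fintype.card γ := by
        have := Finset.card_le_univ (insert c S)
        rwa [Finset.card_insert_of_notMem hcS] at this
      have hBlt : ∀ w : Fin n, ((G c).neighborSet w).Nonempty →
          B.card < ((G c).neighborSet w).ncard := by
        intro w hw
        have := hdeg c w hw
        omega
      obtain ⟨a, b, hab, haB, hbB⟩ := exists_edge_avoiding (G c) (hcol c) B hBlt
      refine ⟨Function.update u c a, Function.update v c b, ?_, ?_⟩
      · intro c' hc'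
        rcases Finset.mem_insert.mp hc' with rfl | hc'
        · simpa using hab
        · have h1 : c' ≠ c := fun h => hcS (h ▸ hc')
          rw [Function.update_of_ne h1, Function.update_of_ne h1]
          exact hadj c' hc'
      · have hmemB : ∀ c' ∈ S, u c' ∈ B ∧ v c' ∈ B := by
          intro c' hc'
          constructor <;> exact Finset.mem_biUnion.mpr ⟨c', hc', by simp⟩
        have hmix : ∀ c' ∈ S, ({a, b} : Finset (Fin n)) ∩ {u c', v c'} = ∅ := by
          intro c' hc'
          rw [Finset.eq_empty_iff_forall_notMem]
          intro x hx
          simp only [Finset.mem_inter, Finset.mem_insert, Finset.mem_singleton] at hx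
          obtain ⟨h3, h4⟩ := hx
          obtain ⟨hu2, hv2⟩ := hmemB c' hc'
          rcases h3 with rfl | rfl <;> rcases h4 with rfl | rfl <;> first
            | exact haB hu2 | exact haB hv2 | exact hbB hu2 | exact hbB hv2
        intro c1 hc1 c2 hc2 hne
        rcases Finset.mem_insert.mp hc1 with rfl | hc1'
        · rcases Finset.mem_insert.mp hc2 with rfl | hc2'
          · exact absurd rfl hne
          · have h2 : c2 ≠ c1 := fun h => hcS (h ▸ hc2')
            rw [Function.update_self, Function.update_self,
              Function.update_of_ne h2, Function.update_of_ne h2]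
            exact hmix c2 hc2'
        · rcases Finset.mem_insert.mp hc2 with rfl | hc2'
          · have h1 : c1 ≠ c2 := fun h => hcS (h ▸ hc1')
            rw [Function.update_self, Function.update_self,
              Function.update_of_ne h1, Function.update_of_ne h1]
            rw [Finset.inter_comm]
            exact hmix c1 hc1'
          · have h1 : c1 ≠ c := fun h => hcS (h ▸ hc1')
            have h2 : c2 ≠ c := fun h => hcS (h ▸ hc2')
            rw [Function.update_of_ne h1, Function.update_of_ne h1,
              Function.update_of_ne h2, Function.update_of_ne h2]
            exact hdisj c1 hc1' c2 hc2' hne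
  obtain ⟨u, v, h1, h2⟩ := key Finset.univ
  exact ⟨u, v, fun c => h1 c (Finset.mem_univ c),
    fun c c' h => h2 c (Finset.mem_univ c) c' (Finset.mem_univ c') h⟩
end

section
/- For all k, r ∈ ℕ with k ≥ 2, there exists an r-edge-coloured complete k-graph H such that every partition of the vertex set of H into vertex-disjoint monochromatic tight cycles uses at least r cycles. -/
/-- A vertex set `C` forms a monochromatic tight cycle in the `χ`-edge-coloured complete
`k`-graph on `Fin n`: either `C` is degenerate (at most `k` vertices), or the vertices of `C`
can be cyclically ordered so that every `k` consecutive vertices form an edge, all of these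
edges having the same colour. -/
def MonoTightCycle {n : ℕ} {α : Type*} (k : ℕ) (χ : Finset (Fin n) → α)
    (C : Finset (Fin n)) : Prop :=
  C.card ≤ k ∨
  ∃ (g : ℕ → Fin n) (c : α),
    (∀ i, g (i + C.card) = g i) ∧
    Set.InjOn g (Set.Iio C.card) ∧
    (Finset.range C.card).image g = C ∧
    ∀ i, χ ((Finset.range k).image (fun j => g (i + j))) = c

namespace AtLeastR

/-- base of the geometric block sizes -/
def Q (k r : ℕ) : ℕ := 2 * (r + 1) * (k + 1)

/-- block sizes -/
def b (k r i : ℕ) : ℕ := Q k r ^ (i + 1)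

/-- partial sums of block sizes -/
def s (k r i : ℕ) : ℕ := ∑ j ∈ Finset.range i, b k r j

lemma two_le_Q (k r : ℕ) : 2 ≤ Q k r := by
  unfold Q; nlinarith [Nat.zero_le r, Nat.zero_le k]

lemma s_zero (k r : ℕ) : s k r 0 = 0 := Finset.sum_range_zero _

lemma s_succ (k r i : ℕ) : s k r (i + 1) = s k r i + b k r i :=
  Finset.sum_range_succ _ _

lemma s_mono (k r : ℕ) : Monotone (s k r) := fun i j hij =>
  Finset.sum_le_sum_of_subset (Finset.range_subset_range.2 hij)

lemma b_pos (k r i : ℕ) : 0 < b k r i :=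
  pow_pos (lt_of_lt_of_le (by norm_num) (two_le_Q k r)) _

lemma b_le_s (k r : ℕ) {c i : ℕ} (h : c < i) : b k r c ≤ s k r i :=
  Finset.single_le_sum (fun j _ => Nat.zero_le _) (Finset.mem_range.2 h)

/-- the block index of a vertex -/
def f (k r v : ℕ) : ℕ := Nat.findGreatest (fun i => s k r i ≤ v) (r - 1)

lemma f_le (k r v : ℕ) : f k r v ≤ r - 1 := Nat.findGreatest_le _

lemma f_lt (k v : ℕ) {r : ℕ} (hr : 1 ≤ r) : f k r v < r :=
  lt_of_le_of_lt (f_le k r v) (by omega)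

lemma f_mono (k r : ℕ) {v w : ℕ} (h : v ≤ w) : f k r v ≤ f k r w :=
  Nat.findGreatest_mono (fun i hi => le_trans hi h) le_rfl

lemma s_f_le (k r v : ℕ) : s k r (f k r v) ≤ v :=
  Nat.findGreatest_spec (P := fun i => s k r i ≤ v) (Nat.zero_le _)
    (by show s k r 0 ≤ v; rw [s_zero]; exact Nat.zero_le _)

lemma lt_s_f (k : ℕ) {r v : ℕ} (hr : 1 ≤ r) (hv : v < s k r r) :
    v < s k r (f k r v + 1) := by
  by_contra h
  push_neg at h
  have hle := f_le k r v
  have h1 : f k r v + 1 ≤ r - 1 := by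
    by_contra h2
    push_neg at h2
    have heq : f k r v + 1 = r := by omega
    rw [heq] at h; omega
  exact Nat.findGreatest_is_greatest (Nat.lt_succ_self _) h1 h

lemma f_eq (k : ℕ) {r i j : ℕ} (hi : i < r) (hj : j < b k r i) :
    f k r (s k r i + j) = i := by
  have h1 : i ≤ f k r (s k r i + j) :=
    Nat.le_findGreatest (by omega) (Nat.le_add_right _ _)
  by_contra hne
  have h3 : i + 1 ≤ f k r (s k r i + j) := by omega
  have h4 : s k r (i + 1) ≤ s k r (f k r (s k r i + j)) := s_mono k r h3
  have h2 : s k r (f k r (s k r i + j)) ≤ s k r i + j := s_f_le k r _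
  rw [s_succ] at h4
  omega

lemma s_bound (k r : ℕ) : ∀ i, s k r i + 1 ≤ 2 * Q k r ^ i := by
  intro i
  induction i with
  | zero => simp [s_zero]
  | succ i ih =>
    have hQ := two_le_Q k r
    have hp : 1 ≤ Q k r ^ i := Nat.one_le_pow _ _ (by omega)
    have hps : Q k r ^ (i + 1) = Q k r * Q k r ^ i := by ring
    rw [s_succ]
    have hb : b k r i = Q k r * Q k r ^ i := by unfold b; ring
    calc s k r i + b k r i + 1 = (s k r i + 1) + Q k r * Q k r ^ i := by rw [hb]; ring
      _ ≤ 2 * Q k r ^ i + Q k r * Q k r ^ i := by omega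
      _ ≤ Q k r * Q k r ^ i + Q k r * Q k r ^ i := by
          have : 2 * Q k r ^ i ≤ Q k r * Q k r ^ i := Nat.mul_le_mul_right _ hQ
          omega
      _ = 2 * Q k r ^ (i + 1) := by rw [hps]; ring

/-- Structure of a non-degenerate monochromatic tight cycle for a colouring of the form
`min`-block: all vertices have block index at least `c`, and the cycle has at most
`k * (|C ∩ B_c| + 1)` vertices. -/
lemma cycle_struct {n kk : ℕ} (hk : 2 ≤ kk) (fc : Fin n → ℕ) (hf : Monotone fc)
    (C : Finset (Fin n))
    (hC : MonoTightCycle kk (fun e => if h : e.Nonempty then fc (e.min' h) else 0) C)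
    (hbig : kk < C.card) :
    ∃ c, (∀ v ∈ C, c ≤ fc v) ∧
      C.card ≤ kk * ((C.filter (fun v => fc v = c)).card + 1) := by
  rcases hC with h | ⟨g, c, hper, hinj, himg, hcol⟩
  · omega
  have hmk : kk < C.card := hbig
  have hk0 : 0 < kk := by omega
  have hm0 : 0 < C.card := by omega
  have hgmod : ∀ t, g t = g (t % C.card) := by
    intro t
    induction t using Nat.strong_induction_on with
    | _ t ih =>
      rcases lt_or_ge t C.card with h | h
      · rw [Nat.mod_eq_of_lt h]
      · have h1 : t = (t - C.card) + C.card := by omega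
        rw [Nat.mod_eq_sub_mod h]
        calc g t = g ((t - C.card) + C.card) := by rw [← h1]
          _ = g (t - C.card) := hper _
          _ = g ((t - C.card) % C.card) := ih _ (by omega)
  have hgC : ∀ t, g t ∈ C := by
    intro t
    have h1 : g (t % C.card) ∈ (Finset.range C.card).image g :=
      Finset.mem_image_of_mem _ (Finset.mem_range.2 (Nat.mod_lt _ hm0))
    rw [himg] at h1
    rw [hgmod t]
    exact h1
  have hWne : ∀ i : ℕ, ((Finset.range kk).image (fun j => g (i + j))).Nonempty :=
    fun i => (Finset.nonempty_range_iff.2 (by omega)).image _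
  have hχ : ∀ i, fc (((Finset.range kk).image (fun j => g (i + j))).min' (hWne i)) = c := by
    intro i
    have h : (if hh : ((Finset.range kk).image (fun j => g (i + j))).Nonempty
        then fc (((Finset.range kk).image (fun j => g (i + j))).min' hh) else 0) = c := hcol i
    rwa [dif_pos (hWne i)] at h
  have hmin_mem : ∀ i, ((Finset.range kk).image (fun j => g (i + j))).min' (hWne i) ∈ C := by
    intro i
    obtain ⟨j, hj, hgj⟩ := Finset.mem_image.1 (Finset.min'_mem _ (hWne i))
    rw [← hgj]; exact hgC _
  have hmin_le : ∀ i, ((Finset.range kk).image (fun j => g (i + j))).min' (hWne i) ≤ g i := by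
    intro i
    exact Finset.min'_le _ _ (Finset.mem_image.2 ⟨0, Finset.mem_range.2 hk0, by rw [Nat.add_zero]⟩)
  have hlow : ∀ v ∈ C, c ≤ fc v := by
    intro v hv
    rw [← himg] at hv
    obtain ⟨i, hi, rfl⟩ := Finset.mem_image.1 hv
    calc c = fc _ := (hχ i).symm
      _ ≤ fc (g i) := hf (hmin_le i)
  refine ⟨c, hlow, ?_⟩
  have hqk : C.card / kk * kk ≤ C.card := Nat.div_mul_le_self _ _
  have hcards : C.card / kk ≤ (C.filter (fun v => fc v = c)).card := by
    have hmaps : ∀ j ∈ Finset.range (C.card / kk),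
        ((Finset.range kk).image (fun j' => g (j * kk + j'))).min' (hWne _) ∈
          C.filter (fun v => fc v = c) :=
      fun j hj => Finset.mem_filter.2 ⟨hmin_mem _, hχ _⟩
    have hinj2 : Set.InjOn
        (fun j => ((Finset.range kk).image (fun j' => g (j * kk + j'))).min' (hWne _))
        ↑(Finset.range (C.card / kk)) := by
      intro a ha bb hb heq
      simp only [Finset.coe_range, Set.mem_Iio] at ha hb
      obtain ⟨x, hx, hgx⟩ := Finset.mem_image.1 (Finset.min'_mem _ (hWne (a * kk)))
      obtain ⟨y, hy, hgy⟩ := Finset.mem_image.1 (Finset.min'_mem _ (hWne (bb * kk)))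
      simp only at heq
      rw [← hgx, ← hgy] at heq
      have hx' := Finset.mem_range.1 hx
      have hy' := Finset.mem_range.1 hy
      have hax : a * kk + x < C.card := by
        have h1 : a * kk + x < (a + 1) * kk := by
          rw [Nat.add_mul, Nat.one_mul]; omega
        have h2 : (a + 1) * kk ≤ C.card / kk * kk := Nat.mul_le_mul_right _ (by omega)
        omega
      have hby : bb * kk + y < C.card := by
        have h1 : bb * kk + y < (bb + 1) * kk := by
          rw [Nat.add_mul, Nat.one_mul]; omega
        have h2 : (bb + 1) * kk ≤ C.card / kk * kk := Nat.mul_le_mul_right _ (by omega)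
        omega
      have hidx : a * kk + x = bb * kk + y :=
        hinj (Set.mem_Iio.2 hax) (Set.mem_Iio.2 hby) heq
      have e1 : (kk * a + x) / kk = a := by
        rw [Nat.mul_add_div hk0, Nat.div_eq_of_lt hx', Nat.add_zero]
      have e2 : (kk * bb + y) / kk = bb := by
        rw [Nat.mul_add_div hk0, Nat.div_eq_of_lt hy', Nat.add_zero]
      have : kk * a + x = kk * bb + y := by
        rw [Nat.mul_comm kk a, Nat.mul_comm kk bb]; exact hidx
      calc a = (kk * a + x) / kk := e1.symm
        _ = (kk * bb + y) / kk := by rw [this]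
        _ = bb := e2
    have := Finset.card_le_card_of_injOn _ hmaps hinj2
    simpa using this
  have hfin : C.card ≤ kk * (C.card / kk + 1) := by
    have h1 := Nat.lt_div_mul_add (a := C.card) hk0
    calc C.card ≤ C.card / kk * kk + kk := le_of_lt h1
      _ = kk * (C.card / kk + 1) := by ring
  calc C.card ≤ kk * (C.card / kk + 1) := hfin
    _ ≤ kk * ((C.filter (fun v => fc v = c)).card + 1) := by
        exact Nat.mul_le_mul_left _ (by omega)

end AtLeastR

open AtLeastR in
theorem at_least_r_cycles_needed (k r : ℕ) (hk : 2 ≤ k) :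
    ∃ (n : ℕ) (χ : Finset (Fin n) → ℕ),
      ((Finset.univ.filter (fun e : Finset (Fin n) => e.card = k)).image χ).card ≤ r ∧
      ∀ 𝒞 : Finset (Finset (Fin n)),
        (∀ C ∈ 𝒞, MonoTightCycle k χ C) →
        (𝒞 : Set (Finset (Fin n))).PairwiseDisjoint id →
        𝒞.biUnion id = Finset.univ →
        r ≤ 𝒞.card := by
  rcases Nat.eq_zero_or_pos r with hr | hr
  · subst hr
    refine ⟨0, fun _ => 0, ?_, ?_⟩
    · have hempty : (Finset.univ.filter (fun e : Finset (Fin 0) => e.card = k)) = ∅ := by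
        ext e
        simp only [Finset.mem_filter, Finset.mem_univ, true_and, Finset.notMem_empty,
          iff_false]
        intro h
        have h2 : e.card ≤ (Finset.univ : Finset (Fin 0)).card :=
          Finset.card_le_card (Finset.subset_univ e)
        simp only [Finset.card_univ, Fintype.card_fin] at h2
        omega
      rw [hempty]
      simp
    · intro _ _ _ _
      exact Nat.zero_le _
  · refine ⟨s k r r, fun e => if h : e.Nonempty then f k r (e.min' h).val else 0, ?_, ?_⟩
    · -- at most r colours
      have hsub : ((Finset.univ.filter (fun e : Finset (Fin (s k r r)) => e.card = k)).image
          (fun e => if h : e.Nonempty then f k r (e.min' h).val else 0)) ⊆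
          Finset.range r := by
        intro x hx
        obtain ⟨e, -, rfl⟩ := Finset.mem_image.1 hx
        rw [Finset.mem_range]
        split_ifs with h
        · exact f_lt k _ hr
        · exact hr
      calc _ ≤ (Finset.range r).card := Finset.card_le_card hsub
        _ = r := Finset.card_range r
    · intro 𝒞 hmono hdisj hcover
      by_contra hcon
      push_neg at hcon
      -- notation
      set B : ℕ → Finset (Fin (s k r r)) :=
        fun i => Finset.univ.filter (fun v => f k r v.val = i) with hB
      have hn0 : 0 < s k r r := by
        have h1 : s k r 1 ≤ s k r r := s_mono k r hr
        have h2 : s k r 1 = b k r 0 := by rw [s_succ, s_zero, Nat.zero_add]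
        have := b_pos k r 0
        omega
      -- lower bound on block sizes
      have hBge : ∀ i, i < r → b k r i ≤ (B i).card := by
        intro i hi
        have hkey : ∀ j, j < b k r i → s k r i + j < s k r r := by
          intro j hj
          have h1 : s k r i + j < s k r (i + 1) := by rw [s_succ]; omega
          exact lt_of_lt_of_le h1 (s_mono k r hi)
        have hmaps : ∀ j ∈ Finset.range (b k r i),
            (⟨(s k r i + j) % s k r r, Nat.mod_lt _ hn0⟩ : Fin (s k r r)) ∈ B i := by
          intro j hj
          have hj' := Finset.mem_range.1 hj
          rw [hB]
          simp only [Finset.mem_filter, Finset.mem_univ, true_and]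
          show f k r ((s k r i + j) % s k r r) = i
          rw [Nat.mod_eq_of_lt (hkey j hj')]
          exact f_eq k hi hj'
        have hinj2 : Set.InjOn
            (fun j => (⟨(s k r i + j) % s k r r, Nat.mod_lt _ hn0⟩ : Fin (s k r r)))
            ↑(Finset.range (b k r i)) := by
          intro a ha bb hb heq
          simp only [Finset.coe_range, Set.mem_Iio] at ha hb
          have hva := congrArg Fin.val heq
          simp only [Nat.mod_eq_of_lt (hkey a ha), Nat.mod_eq_of_lt (hkey bb hb)] at hva
          omega
        have := Finset.card_le_card_of_injOn _ hmaps hinj2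
        simpa using this
      -- upper bound on block sizes
      have hBle : ∀ i, i < r → (B i).card ≤ b k r i := by
        intro i hi
        have hmaps : ∀ v ∈ B i, v.val - s k r i ∈ Finset.range (b k r i) := by
          intro v hv
          rw [hB] at hv
          simp only [Finset.mem_filter, Finset.mem_univ, true_and] at hv
          have h1 : s k r i ≤ v.val := by rw [← hv]; exact s_f_le k r _
          have h2 : v.val < s k r (i + 1) := by
            have := lt_s_f k hr (v := v.val) v.isLt
            rw [hv] at this
            exact this
          rw [s_succ] at h2
          exact Finset.mem_range.2 (by omega)
        have hinj2 : Set.InjOn (fun v : Fin (s k r r) => v.val - s k r i) ↑(B i) := by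
          intro v hv w hw heq
          simp only [Finset.mem_coe, hB, Finset.mem_filter, Finset.mem_univ, true_and]
            at hv hw
          have h1 : s k r i ≤ v.val := by rw [← hv]; exact s_f_le k r _
          have h2 : s k r i ≤ w.val := by rw [← hw]; exact s_f_le k r _
          simp only at heq
          exact Fin.ext (by omega)
        have := Finset.card_le_card_of_injOn _ hmaps hinj2
        simpa using this
      -- pigeonhole: for each block there is a cycle covering a lot of it
      have hpig : ∀ i, i < r → ∃ C ∈ 𝒞, k * (s k r i + 1) < (B i ∩ C).card := by
        intro i hi
        by_contra hall
        push_neg at hall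
        have hcov : B i ⊆ 𝒞.biUnion (fun C => B i ∩ C) := by
          intro v hv
          have hvu : v ∈ 𝒞.biUnion id := by rw [hcover]; exact Finset.mem_univ v
          obtain ⟨C, hC, hvC⟩ := Finset.mem_biUnion.1 hvu
          exact Finset.mem_biUnion.2 ⟨C, hC, Finset.mem_inter.2 ⟨hv, hvC⟩⟩
        have h1 : (B i).card ≤ ∑ C ∈ 𝒞, (B i ∩ C).card :=
          le_trans (Finset.card_le_card hcov) Finset.card_biUnion_le
        have h2 : ∑ C ∈ 𝒞, (B i ∩ C).card ≤ 𝒞.card * (k * (s k r i + 1)) := by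
          have := Finset.sum_le_card_nsmul 𝒞 (fun C => (B i ∩ C).card)
            (k * (s k r i + 1)) (fun C hC => hall C hC)
          simpa [smul_eq_mul] using this
        have h3 : 𝒞.card * (k * (s k r i + 1)) ≤ (r - 1) * (k * (s k r i + 1)) :=
          Nat.mul_le_mul_right _ (by omega)
        have h4 : (r - 1) * (k * (s k r i + 1)) < b k r i := by
          have hs := s_bound k r i
          have hp : 0 < Q k r ^ i := pow_pos (by have := two_le_Q k r; omega) _
          have h5 : (r - 1) * (k * (s k r i + 1)) ≤ (r - 1) * (k * (2 * Q k r ^ i)) :=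
            Nat.mul_le_mul_left _ (Nat.mul_le_mul_left _ hs)
          have h6 : (r - 1) * (k * (2 * Q k r ^ i)) < Q k r * Q k r ^ i := by
            have hbase : (r - 1) * (k * 2) < Q k r := by
              unfold Q
              have : (r - 1) * (k * 2) ≤ r * k * 2 := by nlinarith [Nat.sub_le r 1]
              nlinarith
            calc (r - 1) * (k * (2 * Q k r ^ i)) = ((r - 1) * (k * 2)) * Q k r ^ i := by ring
              _ < Q k r * Q k r ^ i := (Nat.mul_lt_mul_right hp).2 hbase
          have hb : b k r i = Q k r * Q k r ^ i := by unfold b; ring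
          omega
        have h5 := hBge i hi
        omega
      -- from each such cycle, pin down its colour
      have hsel : ∀ i, i < r → ∃ C ∈ 𝒞,
          (∀ v ∈ C, i ≤ f k r v.val) ∧ (∃ v ∈ C, f k r v.val = i) := by
        intro i hi
        obtain ⟨C, hC, hbigint⟩ := hpig i hi
        have hsub : B i ∩ C ⊆ C := Finset.inter_subset_right
        have hcard : (B i ∩ C).card ≤ C.card := Finset.card_le_card hsub
        have hks : k ≤ k * (s k r i + 1) := Nat.le_mul_of_pos_right _ (by omega)
        have hbigC : k < C.card := by omega
        have hfmono : Monotone (fun v : Fin (s k r r) => f k r v.val) := by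
          intro v w hvw
          exact f_mono k r hvw
        obtain ⟨c, hlow, hsize⟩ := cycle_struct hk _ hfmono C (hmono C hC) hbigC
        -- a vertex in B i ∩ C
        have hne : (B i ∩ C).Nonempty := Finset.card_pos.1 (by omega)
        obtain ⟨v0, hv0⟩ := hne
        have hv0B : f k r v0.val = i := by
          have := (Finset.mem_inter.1 hv0).1
          rw [hB] at this
          simpa using this
        have hv0C : v0 ∈ C := (Finset.mem_inter.1 hv0).2
        have hci : c ≤ i := by
          have := hlow v0 hv0C
          omega
        have hic : i ≤ c := by
          by_contra hlt
          push_neg at hlt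
          -- c < i, so C is small, contradiction
          have hfsub : C.filter (fun v => f k r v.val = c) ⊆ B c := by
            intro v hv
            rw [hB]
            simp only [Finset.mem_filter, Finset.mem_univ, true_and]
            exact (Finset.mem_filter.1 hv).2
          have h1 : (C.filter (fun v => f k r v.val = c)).card ≤ b k r c :=
            le_trans (Finset.card_le_card hfsub) (hBle c (by omega))
          have h2 : b k r c ≤ s k r i := b_le_s k r hlt
          have h3 : C.card ≤ k * (s k r i + 1) := by
            calc C.card ≤ k * ((C.filter (fun v => f k r v.val = c)).card + 1) := hsize
              _ ≤ k * (s k r i + 1) := Nat.mul_le_mul_left _ (by omega)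
          omega
        have hceq : c = i := by omega
        refine ⟨C, hC, ?_, ⟨v0, hv0C, hv0B⟩⟩
        intro v hv
        rw [← hceq]
        exact hlow v hv
      -- build an injection from range r into 𝒞
      classical
      choose! Cf hCmem hClo hCex using hsel
      have hinj3 : Set.InjOn Cf ↑(Finset.range r) := by
        intro i hi j hj heq
        simp only [Finset.coe_range, Set.mem_Iio] at hi hj
        obtain ⟨v, hv, hfv⟩ := hCex j hj
        have h1 : i ≤ f k r v.val := hClo i hi v (by rw [heq]; exact hv)
        obtain ⟨w, hw, hfw⟩ := hCex i hi
        have h2 : j ≤ f k r w.val := hClo j hj w (by rw [← heq]; exact hw)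
        omega
      have hmaps : ∀ i ∈ Finset.range r, Cf i ∈ 𝒞 := by
        intro i hi
        exact hCmem i (Finset.mem_range.1 hi)
      have := Finset.card_le_card_of_injOn Cf hmaps hinj3
      simp only [Finset.card_range] at this
      omega
end
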